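/- For the identity exp(-(1/(4τ))(Y-X)·(Θ cosh Θ/sinh Θ)·(Y-X)ᵀ - 2τ(Y-X)·((cosh Θ - 1)/(Θ sinh Θ))·B·(XB)ᵀ - 2τ·(XB)·((cosh Θ♯ - 1)/(Θ♯ sinh Θ♯))·(XB)ᵀ) = exp(-(1/(4τ))Y·(Θ cosh Θ/sinh Θ)·Yᵀ - (1/(4τ))X·(Θ cosh Θ/sinh Θ)·Xᵀ + (1/(2τ))Y·(Θ/sinh Θ)·Xᵀ) holds for all row vectors X, Y ∈ ℝⁿ, where Θ = √(4τ²BBᵀ) and Θ♯ = √(4τ²BᵀB). -/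
import Mathlib


open Real Matrix

/-- Apply a scalar function spectrally, via an orthogonal diagonalization. -/
noncomputable def matFun {n : ℕ} (U : Matrix (Fin n) (Fin n) ℝ) (d : Fin n → ℝ)
    (f : ℝ → ℝ) : Matrix (Fin n) (Fin n) ℝ :=
  U * Matrix.diagonal (fun i => f (d i)) * Uᵀ

/-- `x / sinh x`, extended by its limit `1` at `x = 0`. -/
noncomputable def xDivSinh (x : ℝ) : ℝ := if x = 0 then 1 else x / Real.sinh x

/-- `x cosh x / sinh x`, extended by its limit `1` at `x = 0`. -/
noncomputable def xCoshDivSinh (x : ℝ) : ℝ :=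
  if x = 0 then 1 else x * Real.cosh x / Real.sinh x

/-- `(cosh x - 1)/(x sinh x)`, extended by its limit `1/2` at `x = 0`. -/
noncomputable def coshSubOneDivXSinh (x : ℝ) : ℝ :=
  if x = 0 then 1 / 2 else (Real.cosh x - 1) / (x * Real.sinh x)

lemma matFun_transpose {n : ℕ} (U : Matrix (Fin n) (Fin n) ℝ) (d : Fin n → ℝ) (f : ℝ → ℝ) :
    (matFun U d f)ᵀ = matFun U d f := by
  simp [matFun, Matrix.transpose_mul, Matrix.mul_assoc]

lemma matFun_mul {n : ℕ} (U : Matrix (Fin n) (Fin n) ℝ) (d : Fin n → ℝ)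
    (hU' : Uᵀ * U = 1) (f g : ℝ → ℝ) :
    matFun U d f * matFun U d g = matFun U d (fun x => f x * g x) := by
  simp only [matFun, Matrix.mul_assoc]
  rw [← Matrix.mul_assoc Uᵀ U, hU', Matrix.one_mul, ← Matrix.mul_assoc (diagonal _),
    Matrix.diagonal_mul_diagonal]

lemma pointwise_id : ∀ x : ℝ, xCoshDivSinh x = xDivSinh x + coshSubOneDivXSinh x * x ^ 2 := by
  intro x
  by_cases hx : x = 0
  · simp [hx, xCoshDivSinh, xDivSinh, coshSubOneDivXSinh]
  · have hs : Real.sinh x ≠ 0 := Real.sinh_ne_zero.mpr hx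
    simp only [xCoshDivSinh, xDivSinh, coshSubOneDivXSinh, if_neg hx]
    field_simp
    ring

lemma conj_sq {n : ℕ} (U : Matrix (Fin n) (Fin n) ℝ) (d : Fin n → ℝ)
    (hU' : Uᵀ * U = 1) :
    (U * Matrix.diagonal d * Uᵀ) ^ 2 = U * Matrix.diagonal (fun i => d i ^ 2) * Uᵀ := by
  rw [pow_two]
  simp only [Matrix.mul_assoc]
  rw [← Matrix.mul_assoc Uᵀ U, hU', Matrix.one_mul, ← Matrix.mul_assoc (diagonal _),
    Matrix.diagonal_mul_diagonal]
  congr 2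
  ext i
  ring_nf

lemma intertwine {n : ℕ} (τ : ℝ) (B U V : Matrix (Fin n) (Fin n) ℝ) (d e : Fin n → ℝ)
    (hU : U * Uᵀ = 1) (hV : V * Vᵀ = 1)
    (hd : ∀ i, 0 ≤ d i) (he : ∀ i, 0 ≤ e i)
    (hΘ : (U * Matrix.diagonal d * Uᵀ) ^ 2 = (4 * τ ^ 2) • (B * Bᵀ))
    (hΘs : (V * Matrix.diagonal e * Vᵀ) ^ 2 = (4 * τ ^ 2) • (Bᵀ * B))
    (f : ℝ → ℝ) : matFun U d f * B = B * matFun V e f := by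
  have hU' : Uᵀ * U = 1 := mul_eq_one_comm.mp hU
  have hV' : Vᵀ * V = 1 := mul_eq_one_comm.mp hV
  set M : Matrix (Fin n) (Fin n) ℝ := Uᵀ * B * V with hM
  have hsq : U * Matrix.diagonal (fun i => d i ^ 2) * Uᵀ * B
      = B * (V * Matrix.diagonal (fun i => e i ^ 2) * Vᵀ) := by
    rw [← conj_sq U d hU', ← conj_sq V e hV', hΘ, hΘs]
    rw [Matrix.smul_mul, Matrix.mul_smul]
    congr 1
    simp only [Matrix.mul_assoc]
  have hDM : Matrix.diagonal (fun i => d i ^ 2) * M = M * Matrix.diagonal (fun i => e i ^ 2) := by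
    rw [hM]
    calc Matrix.diagonal (fun i => d i ^ 2) * (Uᵀ * B * V)
        = Uᵀ * (U * Matrix.diagonal (fun i => d i ^ 2) * Uᵀ * B) * V := by
          simp only [Matrix.mul_assoc, ← Matrix.mul_assoc Uᵀ U, hU', Matrix.one_mul]
      _ = Uᵀ * (B * (V * Matrix.diagonal (fun i => e i ^ 2) * Vᵀ)) * V := by rw [hsq]
      _ = Uᵀ * B * V * Matrix.diagonal (fun i => e i ^ 2) := by
          simp only [Matrix.mul_assoc, ← Matrix.mul_assoc Vᵀ V, hV', Matrix.mul_one]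
  have hfM : Matrix.diagonal (fun i => f (d i)) * M = M * Matrix.diagonal (fun i => f (e i)) := by
    ext i j
    rw [Matrix.diagonal_mul, Matrix.mul_diagonal]
    by_cases hMij : M i j = 0
    · simp [hMij]
    · have h2 : d i ^ 2 * M i j = M i j * e j ^ 2 := by
        have := congrFun (congrFun hDM i) j
        simpa [Matrix.diagonal_mul, Matrix.mul_diagonal] using this
      have hde : d i = e j := by
        have h3 : d i ^ 2 = e j ^ 2 := by
          rw [mul_comm (M i j)] at h2
          exact mul_right_cancel₀ hMij h2
        calc d i = Real.sqrt (d i ^ 2) := (Real.sqrt_sq (hd i)).symm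
          _ = Real.sqrt (e j ^ 2) := by rw [h3]
          _ = e j := Real.sqrt_sq (he j)
      rw [hde, mul_comm]
  have hB : B = U * M * Vᵀ := by
    rw [hM]
    simp only [Matrix.mul_assoc, ← Matrix.mul_assoc V Vᵀ]
    rw [← Matrix.mul_assoc U Uᵀ, hU, Matrix.one_mul, hV, Matrix.mul_one]
  calc matFun U d f * B = U * (Matrix.diagonal (fun i => f (d i)) * M) * Vᵀ := by
        rw [matFun, hB]
        simp only [Matrix.mul_assoc, ← Matrix.mul_assoc Uᵀ U, hU', Matrix.one_mul]
    _ = U * (M * Matrix.diagonal (fun i => f (e i))) * Vᵀ := by rw [hfM]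
    _ = B * matFun V e f := by
        rw [matFun, hB]
        simp only [Matrix.mul_assoc, ← Matrix.mul_assoc Vᵀ V, hV', Matrix.one_mul]


/-- The exponent identity behind Mehler's formula (Proposition 5(i)):
with `Θ = √(4τ²BBᵀ)` and `Θ♯ = √(4τ²BᵀB)`, the quadratic form in the definition of
`Φ₀(τ,Y,X,B) = Φ(τ,Y-X,XB,B)` coincides with the classical Mehler exponent. -/
theorem mehler_exponent_identity {n : ℕ} (τ : ℝ) (hτ : 0 < τ)
    (B U V : Matrix (Fin n) (Fin n) ℝ) (d e : Fin n → ℝ)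
    (hU : U * Uᵀ = 1) (hV : V * Vᵀ = 1)
    (hd : ∀ i, 0 ≤ d i) (he : ∀ i, 0 ≤ e i)
    (hΘ : (U * Matrix.diagonal d * Uᵀ) ^ 2 = (4 * τ ^ 2) • (B * Bᵀ))
    (hΘs : (V * Matrix.diagonal e * Vᵀ) ^ 2 = (4 * τ ^ 2) • (Bᵀ * B))
    (X Y : Fin n → ℝ) :
    Real.exp (-(1 / (4 * τ)) * ((Y - X) ⬝ᵥ (matFun U d xCoshDivSinh *ᵥ (Y - X)))
        - 2 * τ * ((Y - X) ⬝ᵥ ((matFun U d coshSubOneDivXSinh * B) *ᵥ (X ᵥ* B)))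
        - 2 * τ * ((X ᵥ* B) ⬝ᵥ (matFun V e coshSubOneDivXSinh *ᵥ (X ᵥ* B)))) =
    Real.exp (-(1 / (4 * τ)) * (Y ⬝ᵥ (matFun U d xCoshDivSinh *ᵥ Y))
        - (1 / (4 * τ)) * (X ⬝ᵥ (matFun U d xCoshDivSinh *ᵥ X))
        + (1 / (2 * τ)) * (Y ⬝ᵥ (matFun U d xDivSinh *ᵥ X))) := by
  have hU' : Uᵀ * U = 1 := mul_eq_one_comm.mp hU
  have hτ' : τ ≠ 0 := ne_of_gt hτ
  set A := matFun U d xCoshDivSinh with hA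
  set S := matFun U d xDivSinh with hS
  set C := matFun U d coshSubOneDivXSinh with hC
  set Cs := matFun V e coshSubOneDivXSinh with hCs
  set P := C * (B * Bᵀ) with hP
  -- A = S + 4τ² P
  have hASP : A = S + (4 * τ ^ 2) • P := by
    have h1 : (4 * τ ^ 2) • (B * Bᵀ) = matFun U d (fun x => x ^ 2) := by
      rw [← hΘ, conj_sq U d hU']
      rfl
    rw [hP, ← Matrix.mul_smul, h1, hC, matFun_mul U d hU']
    have h2 : matFun U d (fun x => xDivSinh x + coshSubOneDivXSinh x * x ^ 2)
        = S + matFun U d (fun x => coshSubOneDivXSinh x * x ^ 2) := by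
      simp only [matFun, hS]
      rw [← Matrix.add_mul, ← Matrix.mul_add, ← Matrix.diagonal_add]
    rw [hA]
    calc matFun U d xCoshDivSinh
        = matFun U d (fun x => xDivSinh x + coshSubOneDivXSinh x * x ^ 2) := by
          have hfe : (fun i => xCoshDivSinh (d i))
              = fun i => xDivSinh (d i) + coshSubOneDivXSinh (d i) * (d i) ^ 2 :=
            funext fun i => pointwise_id (d i)
          unfold matFun
          rw [hfe]
      _ = S + matFun U d (fun x => coshSubOneDivXSinh x * x ^ 2) := h2
  -- B Cs = C B
  have hBCs : B * Cs = C * B :=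
    (intertwine τ B U V d e hU hV hd he hΘ hΘs coshSubOneDivXSinh).symm
  -- rewrite vecMul
  have hXB : X ᵥ* B = Bᵀ *ᵥ X := (Matrix.mulVec_transpose B X).symm
  -- term 2
  have hT2 : (matFun U d coshSubOneDivXSinh * B) *ᵥ (X ᵥ* B) = P *ᵥ X := by
    rw [hXB, Matrix.mulVec_mulVec, hP, ← hC, Matrix.mul_assoc]
  -- term 3
  have hPalt : P = B * (Cs * Bᵀ) := by
    rw [hP, ← Matrix.mul_assoc, ← hBCs, Matrix.mul_assoc]
  have hT3 : (X ᵥ* B) ⬝ᵥ (Cs *ᵥ (X ᵥ* B)) = X ⬝ᵥ (P *ᵥ X) := by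
    rw [hXB, hPalt]
    have key : X ⬝ᵥ ((B * (Cs * Bᵀ)) *ᵥ X) = (Bᵀ *ᵥ X) ⬝ᵥ (Cs *ᵥ (Bᵀ *ᵥ X)) := by
      rw [← Matrix.mulVec_mulVec, Matrix.dotProduct_mulVec, hXB, ← Matrix.mulVec_mulVec]
    exact key.symm
  -- symmetry of A
  have hAsymm : X ⬝ᵥ (A *ᵥ Y) = Y ⬝ᵥ (A *ᵥ X) := by
    rw [Matrix.dotProduct_mulVec, ← Matrix.mulVec_transpose, matFun_transpose,
      dotProduct_comm]
  -- A relation on vectors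
  have hAvec : Y ⬝ᵥ (A *ᵥ X) = Y ⬝ᵥ (S *ᵥ X) + 4 * τ ^ 2 * (Y ⬝ᵥ (P *ᵥ X)) := by
    rw [hASP, Matrix.add_mulVec, dotProduct_add, Matrix.smul_mulVec,
      dotProduct_smul, smul_eq_mul]
  congr 1
  rw [hT2, hT3]
  rw [Matrix.mulVec_sub, sub_dotProduct, dotProduct_sub, dotProduct_sub,
    sub_dotProduct, hAsymm, hAvec]
  field_simp
  ring
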